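/- arXiv:2511.13014 — 6 statements merged into one kernel-verified Lean document; each statement's English description precedes it below -/
import Mathlib

section
/- Let U be a proper prefix of a palindrome V (so |U| < |V|). Then |V| − |U| is a period of V if and only if U is a palindrome. -/
/-- A string is represented as a list over an integer alphabet.
A positive integer `p` is a period of `L` if `L[i] = L[i+p]` for all `i ∈ [0, |L| - p)`. -/
def HasPeriod (L : List ℕ) (p : ℕ) : Prop :=
  0 < p ∧ ∀ i, i + p < L.length → L[i]! = L[i + p]!

/-- Let `U` be a proper prefix of a palindrome `V` (so `|U| < |V|`).
Then `|V| - |U|` is a period of `V` if and only if `U` is a palindrome. -/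
theorem stmt0 (U V : List ℕ) (hpre : U <+: V) (hlt : U.length < V.length)
    (hV : V.reverse = V) :
    HasPeriod V (V.length - U.length) ↔ U.reverse = U := by
  have hpal : ∀ i, i < V.length → V[i]! = V[V.length - 1 - i]! := by
    intro i hi
    have h1 : V.reverse[i]! = V[V.length - 1 - i]! := by
      rw [getElem!_pos V.reverse i (by simpa using hi),
        getElem!_pos V (V.length - 1 - i) (by omega)]
      exact List.getElem_reverse ..
    rw [hV] at h1
    exact h1
  have hUV : ∀ i, i < U.length → U[i]! = V[i]! := by
    intro i hi
    rw [getElem!_pos U i hi, getElem!_pos V i (hi.trans hlt)]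
    exact hpre.getElem hi
  constructor
  · rintro ⟨hp, hper⟩
    apply List.ext_getElem (by simp)
    intro i h1 h2
    rw [List.getElem_reverse]
    simp only [List.length_reverse] at h1
    rw [← getElem!_pos U i h2, ← getElem!_pos U (U.length - 1 - i) (by omega)]
    have key : V[i]! = V[U.length - 1 - i]! := by
      rw [hper i (by omega), hpal (i + (V.length - U.length)) (by omega)]
      congr 1
      omega
    rw [hUV i h2, hUV (U.length - 1 - i) (by omega), key]
  · intro hU
    refine ⟨by omega, fun i hi => ?_⟩
    have him : i < U.length := by omega
    have hrev : U[i]! = U[U.length - 1 - i]! := by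
      have h1 : U.reverse[i]! = U[U.length - 1 - i]! := by
        rw [getElem!_pos U.reverse i (by simpa using him),
          getElem!_pos U (U.length - 1 - i) (by omega)]
        exact List.getElem_reverse ..
      rw [hU] at h1
      exact h1
    rw [← hUV i him, hrev, hUV (U.length - 1 - i) (by omega),
      hpal (U.length - 1 - i) (by omega)]
    congr 1
    omega
end

section
/- If a string P with a period p is a palindrome, the string cP (for a letter c) has p as a period, and the string Pc' (for a letter c') does not have p as a period, then the string S = cPc' is not a palindrome. -/
theorem HasPeriod.reverse {L : List ℕ} {p : ℕ} (h : HasPeriod L p) : HasPeriod L.reverse p := by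
  refine ⟨h.1, fun i hi => ?_⟩
  rw [List.length_reverse] at hi
  have key := h.2 (L.length - 1 - (i + p)) (by omega)
  simp only [List.getElem!_eq_getElem?_getD] at key ⊢
  rw [List.getElem?_reverse' (j := L.length - 1 - i) (by omega),
    List.getElem?_reverse' (j := L.length - 1 - (i + p)) (by omega), key]
  congr 2
  omega

theorem stmt3_general (P : List ℕ) (c c' : ℕ) (p : ℕ)
    (hPpal : P.reverse = P)
    (hcP : HasPeriod (c :: P) p) (hPc : ¬ HasPeriod (P ++ [c']) p) :
    (c :: (P ++ [c'])).reverse ≠ c :: (P ++ [c']) := by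
  intro hpal
  obtain rfl : c' = c := by simpa [hPpal] using congrArg List.head? hpal
  -- once `c' = c`, the string `Pc'` is `(cP)^R` because `P` is a palindrome
  exact hPc (by simpa [hPpal] using hcP.reverse)

/-- If a string `P` with a period `p` is a palindrome, the string `cP` (for a letter `c`)
has `p` as a period, and the string `Pc'` (for a letter `c'`) does not have `p` as a period,
then the string `S = cPc'` is not a palindrome. -/
theorem stmt3 (P : List ℕ) (c c' : ℕ) (p : ℕ)
    (hPper : HasPeriod P p) (hPpal : P.reverse = P)
    (hcP : HasPeriod (c :: P) p) (hPc : ¬ HasPeriod (P ++ [c']) p) :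
    (c :: (P ++ [c'])).reverse ≠ c :: (P ++ [c']) :=
  stmt3_general P c c' p hPpal hcP hPc
end

section
/- Let F = S[i..j] = B1B2B3B4 be a fragment of S of length ℓ = 4ℓ′, with ℓ′ = |B1| = |B2| = |B3| = |B4| > 0. If P_F is empty, then M_F is empty. -/
/-- The fragment `S[i..j]` of a string (inclusive endpoints). -/
def Frag (S : List ℕ) (i j : ℕ) : List ℕ := (S.take (j + 1)).drop i

/-- `S[i..j]` is a palindromic fragment of `S`. -/
def IsPalFrag (S : List ℕ) (i j : ℕ) : Prop :=
  i ≤ j ∧ j < S.length ∧ (Frag S i j).reverse = Frag S i j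

/-- `S[i..j]` is a maximal palindrome: it is a palindromic fragment and there is no longer
palindromic fragment of `S` with the same center `(i+j)/2`. -/
def IsMaxPal (S : List ℕ) (i j : ℕ) : Prop :=
  IsPalFrag S i j ∧ ∀ i' j', i' + j' = i + j → i' < i → ¬ IsPalFrag S i' j'

/-- For the fragment `F = S[i..j]` of length `4ℓ'` (so `j = i + 4ℓ' - 1`), `PF S i ℓ'` is the
set of end positions `e` of palindromic fragments `S[i..e]` of `S` that are prefixes of `F`
with centers `(i+e)/2` in `[i+ℓ', i+2ℓ')`. -/
def PF (S : List ℕ) (i ℓ' : ℕ) : Set ℕ :=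
  {e | IsPalFrag S i e ∧ e ≤ i + 4 * ℓ' - 1 ∧
       2 * (i + ℓ') ≤ i + e ∧ i + e < 2 * (i + 2 * ℓ')}

/-- For the fragment `F = S[i..j]` of length `4ℓ'` (so `j = i + 4ℓ' - 1`), `MF S i ℓ'` is the
set of maximal palindromes `S[x..y]` of `S` (represented by the pair `(x, y)`) with centers
`(x+y)/2` in `[i+ℓ', i+2ℓ')` that either exceed `F` (extend beyond an endpoint of `F`)
or are prefixes of `F`. -/
def MF (S : List ℕ) (i ℓ' : ℕ) : Set (ℕ × ℕ) :=
  {q | IsMaxPal S q.1 q.2 ∧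
       2 * (i + ℓ') ≤ q.1 + q.2 ∧ q.1 + q.2 < 2 * (i + 2 * ℓ') ∧
       (q.1 < i ∨ i + 4 * ℓ' - 1 < q.2 ∨ (q.1 = i ∧ q.2 ≤ i + 4 * ℓ' - 1))}


lemma pal_sub (L : List ℕ) (d : ℕ) (hd : 2 * d ≤ L.length) (hpal : L.reverse = L) :
    ((L.drop d).take (L.length - 2 * d)).reverse = (L.drop d).take (L.length - 2 * d) := by
  have ha : (L.drop d).length - (L.length - 2 * d) = d := by simp; omega
  rw [List.reverse_take, List.reverse_drop, hpal, ha, List.take_drop]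
  congr 2
  omega

lemma shrink (S : List ℕ) (x y x' y' : ℕ) (h : IsPalFrag S x y) (hx : x ≤ x')
    (hxy : x' ≤ y') (hsum : x' + y' = x + y) : IsPalFrag S x' y' := by
  obtain ⟨h1, h2, h3⟩ := h
  refine ⟨hxy, by omega, ?_⟩
  have hL : (Frag S x y).length = y + 1 - x := by simp [Frag]; omega
  have hfrag : Frag S x' y' =
      ((Frag S x y).drop (x' - x)).take ((Frag S x y).length - 2 * (x' - x)) := by
    rw [hL]
    unfold Frag
    rw [List.drop_drop, List.take_drop, List.take_take]
    congr 1
    · omega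
    · congr 1
      omega
  rw [hfrag]
  exact pal_sub _ _ (by rw [hL]; omega) h3

/-- Let `F = S[i..j]` be a fragment of `S` of length `4ℓ'` with `ℓ' > 0`.
If `P_F` is empty, then `M_F` is empty. -/
theorem stmt5 (S : List ℕ) (i ℓ' : ℕ) (hℓ : 0 < ℓ') (hF : i + 4 * ℓ' ≤ S.length)
    (hPF : PF S i ℓ' = ∅) : MF S i ℓ' = ∅ := by
  ext ⟨x, y⟩
  simp only [MF, Set.mem_setOf_eq, Set.mem_empty_iff_false, iff_false]
  rintro ⟨⟨hpal, -⟩, hc1, hc2, hcase⟩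
  have hxy : x ≤ y := hpal.1
  have hxi : x ≤ i := by
    rcases hcase with h | h | ⟨h, -⟩ <;> omega
  have he : (x + y - i) ∈ PF S i ℓ' := by
    refine ⟨shrink S x y i (x + y - i) hpal hxi (by omega) (by omega), by omega, by omega, by omega⟩
  rw [hPF] at he
  exact he
end

section
/- Let F = S[i..j] = B1B2B3B4 be a fragment of S of length ℓ = 4ℓ′, with ℓ′ = |B1| = |B2| = |B3| = |B4| > 0. If P_F contains exactly one palindrome, then M_F contains exactly one palindrome. -/
lemma pal_trim (L : List ℕ) (d m : ℕ) (h : L.reverse = L) (hlen : d + m + d = L.length) :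
    ((L.drop d).take m).reverse = (L.drop d).take m := by
  have h1 : (L.drop d).length - m = d := by simp; omega
  have h2 : L.length - d = d + m := by omega
  rw [List.reverse_take, List.reverse_drop, h, List.take_drop, h1, h2]

lemma frag_trim {S : List ℕ} {x y i e : ℕ} (hp : IsPalFrag S x y) (hxi : x ≤ i) (hie : i ≤ e)
    (hsum : x + y = i + e) : IsPalFrag S i e := by
  obtain ⟨hxy, hyS, hrev⟩ := hp
  have hey : e ≤ y := by omega
  refine ⟨hie, by omega, ?_⟩
  have hL : Frag S i e = ((Frag S x y).drop (i - x)).take (e + 1 - i) := by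
    unfold Frag
    rw [List.drop_drop, List.take_drop]
    have h3 : x + (i - x) = i := by omega
    have h4 : i + (e + 1 - i) = e + 1 := by omega
    rw [h3, h4, List.take_take]
    have h5 : min (e+1) (y+1) = e + 1 := by omega
    rw [h5]
  have hlen : (i - x) + (e + 1 - i) + (i - x) = (Frag S x y).length := by
    unfold Frag
    simp
    omega
  rw [hL]
  exact pal_trim _ _ _ hrev hlen

/-- Let `F = S[i..j]` be a fragment of `S` of length `4ℓ'` with `ℓ' > 0`.
If `P_F` contains exactly one palindrome, then `M_F` contains exactly one palindrome. -/
theorem stmt6 (S : List ℕ) (i ℓ' : ℕ) (hℓ : 0 < ℓ') (hF : i + 4 * ℓ' ≤ S.length)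
    (hPF : ∃! e, e ∈ PF S i ℓ') : ∃! q, q ∈ MF S i ℓ' := by
  classical
  obtain ⟨e, ⟨hpal, hej, hc1, hc2⟩, heu⟩ := hPF
  have hie : i ≤ e := by omega
  set s := i + e with hs
  have hsi : s - i = e := by omega
  have hQex : ∃ x, IsPalFrag S x (s - x) := ⟨i, by rw [hsi]; exact hpal⟩
  set x₀ := Nat.find hQex with hx₀
  have hQ0 : IsPalFrag S x₀ (s - x₀) := Nat.find_spec hQex
  have hx0i : x₀ ≤ i := Nat.find_le (by rw [hsi]; exact hpal)
  set y₀ := s - x₀ with hy₀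
  have hxy0 : x₀ + y₀ = s := by omega
  have hmax : IsMaxPal S x₀ y₀ := by
    refine ⟨hQ0, fun i' j' hsum' hlt' hpal' => ?_⟩
    have hj' : j' = s - i' := by omega
    exact Nat.find_min hQex hlt' (hj' ▸ hpal')
  have hmem : (x₀, y₀) ∈ MF S i ℓ' := by
    refine ⟨hmax, by omega, by omega, ?_⟩
    rcases eq_or_lt_of_le hx0i with h | h
    · right; right; exact ⟨h, by omega⟩
    · left; exact h
  refine ⟨(x₀, y₀), hmem, fun q hq => ?_⟩
  obtain ⟨⟨hqpal, hqmax⟩, hq1, hq2, hq3⟩ := hq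
  have hq1i : q.1 ≤ i := by omega
  have htrim : IsPalFrag S i (q.1 + q.2 - i) :=
    frag_trim hqpal hq1i (by omega) (by omega)
  have hePF : (q.1 + q.2 - i) ∈ PF S i ℓ' := ⟨htrim, by omega, by omega, by omega⟩
  have hes : q.1 + q.2 = s := by have := heu _ hePF; omega
  have hn1 : ¬ q.1 < x₀ := fun h => Nat.find_min hQex h
    (by have : s - q.1 = q.2 := by omega
        rw [this]; exact hqpal)
  have hn2 : ¬ x₀ < q.1 := fun h => hqmax x₀ y₀ (by omega) h hQ0
  have : q.1 = x₀ := by omega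
  have : q.2 = y₀ := by omega
  exact Prod.ext ‹q.1 = x₀› ‹q.2 = y₀›
end

section
/- Let F = S[i..j] = B1B2B3B4 be a fragment of S of length ℓ = 4ℓ′, with ℓ′ = |B1| = |B2| = |B3| = |B4| > 0, and suppose P_F contains at least two palindromes. Let P1 be the longest palindrome in P_F with smallest period p, and let P2 be any other palindrome in P_F. Then p ≤ |P1| − |P2| and |P2| > p. -/

lemma frag_length' (S : List ℕ) (i j : ℕ) (hij : i ≤ j) (hj : j < S.length) :
    (Frag S i j).length = j + 1 - i := by
  simp [Frag]; omega

lemma frag_get' (S : List ℕ) (i j k : ℕ) (hij : i ≤ j) (hj : j < S.length) (hk : k ≤ j - i) :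
    (Frag S i j)[k]! = S[i+k]! := by
  have h1 : k < (Frag S i j).length := by rw [frag_length' S i j hij hj]; omega
  have h2 : i + k < S.length := by omega
  rw [getElem!_pos (Frag S i j) k h1, getElem!_pos S (i+k) h2]
  simp [Frag]

lemma pal_symm' (S : List ℕ) (i j : ℕ) (h : IsPalFrag S i j) (k : ℕ) (hk : k ≤ j - i) :
    S[i+k]! = S[j-k]! := by
  obtain ⟨hij, hj, hrev⟩ := h
  have hl : (Frag S i j).length = j + 1 - i := frag_length' S i j hij hj
  have h1 : k < (Frag S i j).length := by omega
  have h2 : j - k - i ≤ j - i := by omega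
  have ha := frag_get' S i j k hij hj hk
  have h3 := frag_get' S i j (j - k - i) hij hj h2
  rw [← ha]
  have he : i + (j - k - i) = j - k := by omega
  rw [he] at h3
  rw [← h3]
  conv_lhs => rw [← hrev]
  have hb : k < (Frag S i j).reverse.length := by simpa using h1
  have hc : j - k - i < (Frag S i j).length := by omega
  rw [getElem!_pos ((Frag S i j).reverse) k hb, getElem!_pos (Frag S i j) (j-k-i) hc]
  rw [List.getElem_reverse]
  congr 1
  simp [hl]; omega

/-- Let `F = S[i..j]` be a fragment of `S` of length `4ℓ'` with `ℓ' > 0`, and suppose `P_F`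
contains at least two palindromes. Let `P1 = S[i..emax]` be the longest palindrome in `P_F`
with smallest period `p`, and let `P2 = S[i..e2]` be any other palindrome in `P_F`.
Then `p ≤ |P1| - |P2|` and `|P2| > p`. -/
theorem stmt8 (S : List ℕ) (i ℓ' : ℕ) (hℓ : 0 < ℓ') (hF : i + 4 * ℓ' ≤ S.length)
    (emax : ℕ) (hmem : emax ∈ PF S i ℓ') (hlong : ∀ e ∈ PF S i ℓ', e ≤ emax)
    (p : ℕ) (hper : HasPeriod (Frag S i emax) p)
    (hmin : ∀ q, HasPeriod (Frag S i emax) q → p ≤ q)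
    (e2 : ℕ) (h2 : e2 ∈ PF S i ℓ') (hne : e2 ≠ emax) :
    p ≤ (Frag S i emax).length - (Frag S i e2).length ∧
    p < (Frag S i e2).length := by
  obtain ⟨hpal1, hub1, hc1, hc1'⟩ := hmem
  obtain ⟨hpal2, hub2, hc2, hc2'⟩ := h2
  have hlt : e2 < emax := lt_of_le_of_ne (hlong e2 ⟨hpal2, hub2, hc2, hc2'⟩) hne
  obtain ⟨hie1, hj1, hrev1⟩ := id hpal1
  obtain ⟨hie2, hj2, hrev2⟩ := id hpal2
  have hl1 : (Frag S i emax).length = emax + 1 - i := frag_length' S i emax hie1 hj1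
  have hl2 : (Frag S i e2).length = e2 + 1 - i := frag_length' S i e2 hie2 hj2
  set q := emax - e2 with hq
  have hqper : HasPeriod (Frag S i emax) q := by
    refine ⟨by omega, fun k hk => ?_⟩
    rw [hl1] at hk
    have hk1 : k ≤ emax - i := by omega
    have hk2 : k + q ≤ emax - i := by omega
    rw [frag_get' S i emax k hie1 hj1 hk1, frag_get' S i emax (k+q) hie1 hj1 hk2]
    have e1 := pal_symm' S i emax hpal1 (k + q) hk2
    have hkk : k ≤ e2 - i := by omega
    have e2s := pal_symm' S i e2 hpal2 k hkk
    have : emax - (k + q) = e2 - k := by omega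
    rw [this] at e1
    rw [← e1] at e2s
    exact e2s
  have hpq := hmin q hqper
  constructor <;> omega
end

section
/- Let S be a string of length n and let S[l..r] be a fragment with period p ≤ r − l + 1 that is maximally periodic, i.e., l = 0 or S[l−1] ≠ S[l−1+p], and r = n−1 or S[r+1] ≠ S[r+1−p]. Let P = S[x..y] be a palindromic fragment with period p satisfying l ≤ x and y ≤ r and p < y − x + 1. If x − l = r − y, then S[l..r] is a palindrome with the same center (x+y)/2 as P. -/
lemma frag_len (S : List ℕ) (l r : ℕ) (hlr : l ≤ r) (hr : r < S.length) :
    (Frag S l r).length = r - l + 1 := by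
  simp [Frag]; omega

lemma frag_get (S : List ℕ) (l r i : ℕ) (hr : r < S.length) (hlr : l ≤ r) (hi : i ≤ r - l) :
    (Frag S l r)[i]! = S[l + i]! := by
  have h1 : i < (Frag S l r).length := by rw [frag_len S l r hlr hr]; omega
  have h2 : l + i < S.length := by omega
  rw [getElem!_pos (Frag S l r) i h1, getElem!_pos S (l + i) h2]
  simp only [Frag, List.getElem_drop, List.getElem_take]

/-- stepping by multiples of the period inside the run -/
lemma run_step (S : List ℕ) (l r p : ℕ) (hlr : l ≤ r) (hr : r < S.length)
    (hper : HasPeriod (Frag S l r) p) :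
    ∀ k a, a + k * p ≤ r - l → S[l + a]! = S[l + (a + k * p)]! := by
  intro k
  induction k with
  | zero => intro a _; simp
  | succ k ih =>
    intro a ha
    have hp := hper.1
    have h1 : a + p ≤ r - l := by nlinarith [Nat.succ_mul k p]
    have h2 : a + p < (Frag S l r).length := by rw [frag_len S l r hlr hr]; omega
    have := hper.2 a h2
    rw [frag_get S l r a hr hlr (by omega), frag_get S l r (a + p) hr hlr h1] at this
    rw [this]
    have := ih (a + p) (by rw [Nat.succ_mul] at ha; omega)
    rw [this]
    congr 2
    rw [Nat.succ_mul]; omega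

lemma run_cong (S : List ℕ) (l r p : ℕ) (hlr : l ≤ r) (hr : r < S.length)
    (hper : HasPeriod (Frag S l r) p) (a b : ℕ) (ha : a ≤ r - l) (hb : b ≤ r - l)
    (hab : a ≡ b [MOD p]) : S[l + a]! = S[l + b]! := by
  rcases le_total a b with h | h
  · obtain ⟨k, hk⟩ := (Nat.modEq_iff_dvd' h).mp hab
    have hb2 : b = a + k * p := by rw [Nat.mul_comm k p]; omega
    rw [hb2] at hb ⊢
    exact run_step S l r p hlr hr hper k a hb
  · obtain ⟨k, hk⟩ := (Nat.modEq_iff_dvd' h).mp hab.symm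
    have ha2 : a = b + k * p := by rw [Nat.mul_comm k p]; omega
    rw [ha2] at ha ⊢
    exact (run_step S l r p hlr hr hper k b ha).symm

lemma pal_sym (S : List ℕ) (x y : ℕ) (hP : IsPalFrag S x y) (j : ℕ) (hj : j ≤ y - x) :
    S[x + j]! = S[x + (y - x - j)]! := by
  obtain ⟨hxy, hy, hrev⟩ := hP
  have hlen := frag_len S x y hxy hy
  rw [← frag_get S x y j hy hxy hj, ← frag_get S x y (y - x - j) hy hxy (by omega)]
  conv_lhs => rw [← hrev]
  have h1 : j < (Frag S x y).reverse.length := by simp [hlen]; omega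
  have h2 : y - x - j < (Frag S x y).length := by rw [hlen]; omega
  rw [getElem!_pos ((Frag S x y).reverse) j h1, getElem!_pos (Frag S x y) (y - x - j) h2,
    List.getElem_reverse]
  congr 1
  simp [hlen]
  try omega

lemma rev_get (L : List ℕ) (n : ℕ) (h : n < L.length) :
    L.reverse[n]! = L[L.length - 1 - n]! := by
  have h1 : n < L.reverse.length := by simpa
  rw [getElem!_pos L.reverse n h1, getElem!_pos L _ (by omega), List.getElem_reverse]


/-- Let `S[l..r]` be a fragment with period `p ≤ r - l + 1` that is maximally periodic,
i.e., `l = 0` or `S[l-1] ≠ S[l-1+p]`, and `r = n-1` or `S[r+1] ≠ S[r+1-p]`. Let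
`P = S[x..y]` be a palindromic fragment with period `p` satisfying `l ≤ x`, `y ≤ r` and
`p < y - x + 1`. If `x - l = r - y`, then `S[l..r]` is a palindrome with the same center
`(x+y)/2` as `P`. -/
theorem stmt13 (S : List ℕ) (l r x y p : ℕ)
    (hlr : l ≤ r) (hr : r < S.length)
    (hper : HasPeriod (Frag S l r) p) (hple : p ≤ r - l + 1)
    (hmaxl : l = 0 ∨ S[l - 1]! ≠ S[l - 1 + p]!)
    (hmaxr : r = S.length - 1 ∨ S[r + 1]! ≠ S[r + 1 - p]!)
    (hP : IsPalFrag S x y) (hPper : HasPeriod (Frag S x y) p)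
    (hlx : l ≤ x) (hyr : y ≤ r) (hplt : p < y - x + 1)
    (heq : x - l = r - y) :
    IsPalFrag S l r ∧ l + r = x + y := by
  have hxy : x ≤ y := hP.1
  have hp : 0 < p := hper.1
  -- notation
  set d := x - l with hd
  set q := y - x with hq
  have hx : x = l + d := by omega
  have hy : y = x + q := by omega
  have hrv : r = l + (q + 2 * d) := by omega
  set m := r - l with hm
  have hmv : m = q + 2 * d := by omega
  have hpq : p ≤ q := by omega
  -- main symmetric property
  have key : ∀ i, i ≤ m → S[l + i]! = S[l + (m - i)]! := by
    intro i hi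
    set j := (i + d * (p - 1)) % p with hj
    have hjp : j < p := Nat.mod_lt _ hp
    have hdj : (d + j) ≡ i [MOD p] := by
      have h2 : d + (i + d * (p - 1)) = i + d * p := by
        have : d * p = d * (p - 1) + d := by
          conv_lhs => rw [show p = (p - 1) + 1 by omega]
          rw [Nat.mul_succ]
        omega
      show (d + j) % p = i % p
      rw [hj, Nat.add_mod_mod, h2, Nat.add_mul_mod_self_right]
    have s1 : S[l + i]! = S[l + (d + j)]! :=
      run_cong S l r p hlr hr hper i (d + j) hi (by omega) hdj.symm
    have s2 : S[x + j]! = S[x + (q - j)]! := pal_sym S x y hP j (by omega)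
    have hab : (d + (q - j)) ≡ (m - i) [MOD p] :=
      Nat.ModEq.add_right_cancel hdj
        (by rw [show d + (q - j) + (d + j) = (m - i) + i by omega])
    have s3 : S[l + (d + (q - j))]! = S[l + (m - i)]! :=
      run_cong S l r p hlr hr hper (d + (q - j)) (m - i) (by omega) (by omega) hab
    rw [s1, show l + (d + j) = x + j by omega, s2,
      show x + (q - j) = l + (d + (q - j)) by omega, s3]
  have hpal : (Frag S l r).reverse = Frag S l r := by
    have hlen := frag_len S l r hlr hr
    apply List.ext_getElem!
    · simp
    intro n
    by_cases hn : n < m + 1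
    · rw [rev_get _ n (by rw [hlen]; omega), hlen]
      rw [show r - l + 1 - 1 - n = m - n by omega,
        frag_get S l r (m - n) hr hlr (by omega), frag_get S l r n hr hlr (by omega)]
      exact (key n (by omega)).symm
    · have h1 : (Frag S l r).reverse[n]! = default :=
        getElem!_neg _ _ (by simp [hlen]; omega)
      have h2 : (Frag S l r)[n]! = default :=
        getElem!_neg _ _ (by rw [hlen]; omega)
      rw [h1, h2]
  exact ⟨⟨hlr, hr, hpal⟩, by omega⟩
end
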